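/- Let t be an n-ary idempotent polymorphism of the digraph D, let d₁,…,dₙ ∈ {0,1,2}, and let I = {i : dᵢ = 2}. Then t(d₁,…,dₙ) = 2 if and only if I is a major subset for t. -/

import Mathlib

/-!
Two tuples with the same set of `2`-coordinates are joined coordinatewise by edges of `D` in
both directions, because `D` contains every edge between `0` and `1` and every loop. Hence so
are their images under a polymorphism; but `2` has no symmetric neighbour in `D` other than
itself, so one image is `2` iff the other is.
-/

namespace DigraphHM11

/-- `f` is a polymorphism of the digraph `(V, E)`. -/
def IsPoly {V : Type*} (E : V → V → Prop) {n : ℕ} (f : (Fin n → V) → V) : Prop :=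
  ∀ a b : Fin n → V, (∀ i, E (a i) (b i)) → E (f a) (f b)

/-- `f` is idempotent. -/
def IsIdem {V : Type*} {n : ℕ} (f : (Fin n → V) → V) : Prop :=
  ∀ x : V, f (fun _ => x) = x

/-- The reflexive digraph `D` on `{0,1,2}` with non-loop edges
`0 → 1`, `1 → 0`, `1 → 2`, `2 → 0`. -/
def DEdge : Fin 3 → Fin 3 → Prop := fun a b =>
  a = b ∨ (a = 0 ∧ b = 1) ∨ (a = 1 ∧ b = 0) ∨ (a = 1 ∧ b = 2) ∨ (a = 2 ∧ b = 0)

/-- `I` is a major subset for `t`: there is a tuple `c` with `t(c) = 2` whose set of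
coordinates equal to `2` is exactly `I`. -/
def IsMajor {n : ℕ} (t : (Fin n → Fin 3) → Fin 3) (I : Finset (Fin n)) : Prop :=
  ∃ c : Fin n → Fin 3, t c = 2 ∧ I = Finset.univ.filter (fun i => c i = 2)

theorem dEdge_of_eq_two_iff {x y : Fin 3} (h : x = 2 ↔ y = 2) : DEdge x y := by
  revert x y
  unfold DEdge
  decide

theorem dEdge_two_and_dEdge_to_two_iff {x : Fin 3} : DEdge 2 x ∧ DEdge x 2 ↔ x = 2 := by
  revert x
  unfold DEdge
  decide

theorem IsPoly.eq_two_iff_of_forall_eq_two_iff {n : ℕ} {t : (Fin n → Fin 3) → Fin 3}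
    (hpoly : IsPoly DEdge t) {c d : Fin n → Fin 3} (h : ∀ i, c i = 2 ↔ d i = 2) :
    t c = 2 ↔ t d = 2 := by
  suffices key : ∀ a b : Fin n → Fin 3, (∀ i, a i = 2 ↔ b i = 2) → t a = 2 → t b = 2 from
    ⟨key c d h, key d c fun i => (h i).symm⟩
  intro a b hab ha
  have hto : DEdge (t a) (t b) := hpoly a b fun i => dEdge_of_eq_two_iff (hab i)
  have hfrom : DEdge (t b) (t a) := hpoly b a fun i => dEdge_of_eq_two_iff (hab i).symm
  rw [ha] at hto hfrom
  exact dEdge_two_and_dEdge_to_two_iff.mp ⟨hto, hfrom⟩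

theorem eq_two_iff_isMajor_general {n : ℕ}
    (t : (Fin n → Fin 3) → Fin 3) (hpoly : IsPoly DEdge t)
    (d : Fin n → Fin 3) :
    t d = 2 ↔ IsMajor t (Finset.univ.filter fun i => d i = 2) := by
  refine ⟨fun hd => ⟨d, hd, rfl⟩, ?_⟩
  rintro ⟨c, hc, htwos⟩
  have hcd : ∀ i, c i = 2 ↔ d i = 2 := fun i =>
    (Finset.filter_inj'.mp htwos (Finset.mem_univ i)).symm
  exact (hpoly.eq_two_iff_of_forall_eq_two_iff hcd).mp hc

/-- For an idempotent polymorphism `t` of `D` and a tuple `d`, `t(d) = 2` iff the set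
`{i : dᵢ = 2}` is a major subset for `t`. -/
theorem eq_two_iff_isMajor {n : ℕ}
    (t : (Fin n → Fin 3) → Fin 3) (hpoly : IsPoly DEdge t) (hidem : IsIdem t)
    (d : Fin n → Fin 3) :
    t d = 2 ↔ IsMajor t (Finset.univ.filter fun i => d i = 2) :=
  eq_two_iff_isMajor_general t hpoly d

end DigraphHM11
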